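/- Fix 0<q<1 and α>−1, and let T̃_k^{(α)} = Σ_{j=0}^{k} π̃_j^{(α)}. Then for every integer ℓ≥0 the series Σ_{k=0}^{∞} (q^k;q^{−1})_ℓ · T̃_k^{(α)} / (λ̃_k^{(α)} π̃_k^{(α)}) converges and equals q^{2ℓ+α+2} / ( (1−q^{ℓ+1})(1−q^{ℓ+α+2}) ). -/

import Mathlib

open Finset

/-- The finite q-Pochhammer symbol `(a;q)_n = ∏_{k=0}^{n−1} (1 − a q^k)`. -/
noncomputable def qPochN (q a : ℝ) (n : ℕ) : ℝ :=
  ∏ k ∈ Finset.range n, (1 - a * q ^ k)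

/-- The infinite q-Pochhammer symbol `(a;q)_∞ = ∏_{k=0}^∞ (1 − a q^k)`. -/
noncomputable def qPochInf (q a : ℝ) : ℝ :=
  ∏' k : ℕ, (1 - a * q ^ k)

/-- `γ(u,v;q) = (q^u;q)_∞/(q^{u+v};q)_∞`. -/
noncomputable def qgamma (q u v : ℝ) : ℝ :=
  qPochInf q (q ^ u) / qPochInf q (q ^ (u + v))

/-- `r_n^{(α)} = (1−γ(n+1,α+1;q))/(1−γ(n,α+1;q))`. -/
noncomputable def rQL (q α : ℝ) (n : ℕ) : ℝ :=
  (1 - qgamma q ((n : ℝ) + 1) (α + 1)) / (1 - qgamma q (n : ℝ) (α + 1))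

/-- The birth rates `λ̃_n^{(α)} = q^{−2n−α−1}(1−q^{n+α+1})/r_n^{(α)}`. -/
noncomputable def lamQL (q α : ℝ) (n : ℕ) : ℝ :=
  q ^ (-(2 * (n : ℝ)) - α - 1) * (1 - q ^ ((n : ℝ) + α + 1)) / rQL q α n

/-- The death rates `μ̃_n^{(α)} = q^{−2n−α}(1−q^n) r_n^{(α)}`. -/
noncomputable def muQL (q α : ℝ) (n : ℕ) : ℝ :=
  q ^ (-(2 * (n : ℝ)) - α) * (1 - q ^ (n : ℝ)) * rQL q α n

/-- `π̃_n^{(α)} = ∏_{k=0}^{n−1} λ̃_k^{(α)}/μ̃_{k+1}^{(α)}` (with `π̃_0 = 1`). -/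
noncomputable def piQL (q α : ℝ) (n : ℕ) : ℝ :=
  ∏ k ∈ Finset.range n, lamQL q α k / muQL q α (k + 1)

/-- `T̃_k^{(α)} = Σ_{j=0}^{k} π̃_j^{(α)}`. -/
noncomputable def TQL (q α : ℝ) (k : ℕ) : ℝ :=
  ∑ j ∈ Finset.range (k + 1), piQL q α j

/-- The descending q-Pochhammer symbol `(q^k;q^{−1})_ℓ = ∏_{i=0}^{ℓ−1}(1−q^{k−i})`. -/
noncomputable def qPochDesc (q : ℝ) (k ℓ : ℕ) : ℝ :=
  ∏ i ∈ Finset.range ℓ, (1 - q ^ ((k : ℝ) - (i : ℝ)))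


/-! Write `b = q^(α+1)`, `g_n = 1 − γ(n, α+1; q)` and `s_m = q^m (b;q)_m / (q;q)_m` for the
terms of the q-binomial series, whose sum is `(bq;q)_∞ / (q;q)_∞ = γ(1, α+1)⁻¹`. The shift rule
`(a;q)_∞ = (a;q)_n (a q^n;q)_∞` gives `γ(n, α+1) = γ(1, α+1) ∑_{m<n} s_m`, so `g_n` is a
normalised tail of a positive series and `g_n − g_{n+1} = γ(1, α+1) s_n`. By induction
`π̃_n = g_1 s_n / (g_n g_{n+1})`, which telescopes to
`T̃_k = g_1 (1/g_{k+1} − 1) / γ(1, α+1)`, and then `T̃_k / (λ̃_k π̃_k) = b q^k g_{k+1} / (1 − b)`.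
Since `(q^k;q^{−1})_ℓ` vanishes for `k < ℓ` and equals `(q^{k−ℓ+1};q)_ℓ` otherwise, the series
splits into two q-binomial series, with sums `1/(1 − q^{ℓ+1})` and `1/(1 − b q^{ℓ+1})` up to a
common factor. -/

open Filter Topology

section qPochhammer

variable {q : ℝ}

lemma qPochN_zero (q a : ℝ) : qPochN q a 0 = 1 := prod_range_zero _

lemma qPochN_succ (q a : ℝ) (n : ℕ) : qPochN q a (n + 1) = qPochN q a n * (1 - a * q ^ n) :=
  prod_range_succ _ _

lemma qPochN_succ' (q a : ℝ) (n : ℕ) : qPochN q a (n + 1) = (1 - a) * qPochN q (a * q) n := by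
  rw [qPochN, prod_range_succ', pow_zero, mul_one, mul_comm, qPochN]
  exact congrArg _ (prod_congr rfl fun k _ => by ring)

lemma qPochN_add (q a : ℝ) (m n : ℕ) :
    qPochN q a (m + n) = qPochN q a m * qPochN q (a * q ^ m) n := by
  simp only [qPochN, prod_range_add, pow_add, mul_assoc]

lemma one_sub_mul_pow_pos (hq0 : 0 ≤ q) (hq1 : q ≤ 1) {a : ℝ} (ha : a < 1) (k : ℕ) :
    0 < 1 - a * q ^ k := by
  rcases le_or_gt a 0 with ha0 | ha0
  · nlinarith [mul_nonpos_of_nonpos_of_nonneg ha0 (pow_nonneg hq0 k)]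
  · nlinarith [mul_le_of_le_one_right ha0.le (pow_le_one₀ hq0 hq1 (n := k))]

lemma one_sub_mul_pow_nonneg (hq0 : 0 ≤ q) (hq1 : q ≤ 1) {a : ℝ} (ha : a ≤ 1) (k : ℕ) :
    0 ≤ 1 - a * q ^ k := by
  rcases le_or_gt a 0 with ha0 | ha0
  · nlinarith [mul_nonpos_of_nonpos_of_nonneg ha0 (pow_nonneg hq0 k)]
  · nlinarith [mul_le_of_le_one_right ha0.le (pow_le_one₀ hq0 hq1 (n := k))]

lemma qPochN_pos (hq0 : 0 ≤ q) (hq1 : q ≤ 1) {a : ℝ} (ha : a < 1) (n : ℕ) :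
    0 < qPochN q a n :=
  prod_pos fun k _ => one_sub_mul_pow_pos hq0 hq1 ha k

lemma qPochN_nonneg (hq0 : 0 ≤ q) (hq1 : q ≤ 1) {a : ℝ} (ha : a ≤ 1) (n : ℕ) :
    0 ≤ qPochN q a n :=
  prod_nonneg fun k _ => one_sub_mul_pow_nonneg hq0 hq1 ha k

lemma summable_norm_neg_mul_pow (hq : |q| < 1) (a : ℝ) :
    Summable fun k : ℕ => ‖-(a * q ^ k)‖ := by
  simpa [abs_mul, abs_pow] using (summable_geometric_of_lt_one (abs_nonneg q) hq).mul_left |a|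

lemma multipliable_one_sub_mul_pow (hq : |q| < 1) (a : ℝ) :
    Multipliable fun k : ℕ => 1 - a * q ^ k := by
  simpa only [sub_eq_add_neg] using
    multipliable_one_add_of_summable (summable_norm_neg_mul_pow hq a)

lemma qPochInf_ne_zero (hq0 : 0 ≤ q) (hq1 : q < 1) {a : ℝ} (ha : a < 1) :
    qPochInf q a ≠ 0 := by
  have hfactor (k : ℕ) : 1 + -(a * q ^ k) ≠ 0 := by
    rw [← sub_eq_add_neg]
    exact (one_sub_mul_pow_pos hq0 hq1.le ha k).ne'
  simpa only [qPochInf, sub_eq_add_neg] using tprod_one_add_ne_zero_of_summable hfactor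
    (summable_norm_neg_mul_pow (by rwa [abs_of_nonneg hq0]) a)

lemma tendsto_qPochN (hq : |q| < 1) (a : ℝ) :
    Tendsto (qPochN q a) atTop (𝓝 (qPochInf q a)) :=
  (multipliable_one_sub_mul_pow hq a).hasProd.tendsto_prod_nat

lemma qPochInf_eq_qPochN_mul (hq : |q| < 1) (a : ℝ) (n : ℕ) :
    qPochInf q a = qPochN q a n * qPochInf q (a * q ^ n) := by
  have htail : Multipliable fun k : ℕ => 1 - a * q ^ (k + n) :=
    (multipliable_one_sub_mul_pow hq (a * q ^ n)).congr fun k => by ring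
  rw [qPochInf, ← Multipliable.prod_mul_tprod_nat_mul' (f := fun k => 1 - a * q ^ k) htail,
    qPochInf]
  exact congrArg _ (tprod_congr fun k => by ring)

lemma qPochInf_one (hq : |q| < 1) : qPochInf q 1 = 0 := by
  simp [qPochInf_eq_qPochN_mul hq 1 1, qPochN]

end qPochhammer

lemma qPochDesc_of_lt (q : ℝ) {k ℓ : ℕ} (h : k < ℓ) : qPochDesc q k ℓ = 0 :=
  prod_eq_zero (mem_range.2 h) (by simp)

lemma qPochDesc_add_self (q : ℝ) (n ℓ : ℕ) :
    qPochDesc q (n + ℓ) ℓ = qPochN q (q * q ^ n) ℓ := by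
  rw [qPochDesc, qPochN, ← prod_range_reflect]
  refine prod_congr rfl fun i hi => ?_
  have hi := mem_range.1 hi
  rw [← Nat.cast_sub (by omega : ℓ - 1 - i ≤ n + ℓ), Real.rpow_natCast, ← pow_succ',
    ← pow_add]
  congr 2
  omega

section qBinomial

variable {q : ℝ}

/-- The terms of the q-binomial series `∑ (a;q)_m / (q;q)_m z^m` at `z = q`. -/
noncomputable def qBinomialTerm (q a : ℝ) (m : ℕ) : ℝ := q ^ m * qPochN q a m / qPochN q q m

lemma qBinomialTerm_succ (q a : ℝ) (m : ℕ) :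
    qBinomialTerm q a (m + 1)
      = qBinomialTerm q a m * (q * (1 - a * q ^ m) / (1 - q * q ^ m)) := by
  simp only [qBinomialTerm, qPochN_succ, pow_succ, div_eq_mul_inv, mul_inv]
  ring

lemma qBinomialTerm_mul_one_sub (q a : ℝ) (m : ℕ) :
    qBinomialTerm q a m * (1 - a * q ^ m)
      = q ^ m * (1 - a) * (qPochN q (a * q) m / qPochN q q m) := by
  rw [qBinomialTerm, div_mul_eq_mul_div, mul_assoc, ← qPochN_succ, qPochN_succ']
  ring

lemma qBinomialTerm_pos (hq0 : 0 < q) (hq1 : q < 1) {a : ℝ} (ha : a < 1) (m : ℕ) :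
    0 < qBinomialTerm q a m :=
  div_pos (mul_pos (pow_pos hq0 m) (qPochN_pos hq0.le hq1.le ha m))
    (qPochN_pos hq0.le hq1.le hq1 m)

lemma sum_range_succ_qBinomialTerm (hq : ∀ n, qPochN q q n ≠ 0) (a : ℝ) (n : ℕ) :
    ∑ m ∈ range (n + 1), qBinomialTerm q a m = qPochN q (a * q) n / qPochN q q n := by
  induction n with
  | zero => simp [qBinomialTerm, qPochN_zero]
  | succ n ih =>
    have hn := hq n
    have hn1 : 1 - q * q ^ n ≠ 0 := by
      have := hq (n + 1)
      rw [qPochN_succ] at this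
      exact right_ne_zero_of_mul this
    rw [sum_range_succ, ih, qBinomialTerm, qPochN_succ q (a * q), qPochN_succ' q a,
      qPochN_succ q q n]
    field_simp
    ring

lemma hasSum_qBinomialTerm (hq0 : 0 ≤ q) (hq1 : q < 1) {a : ℝ} (ha : a ≤ 1) :
    HasSum (qBinomialTerm q a) (qPochInf q (a * q) / qPochInf q q) := by
  have hq : |q| < 1 := by rwa [abs_of_nonneg hq0]
  have hnonneg (m : ℕ) : 0 ≤ qBinomialTerm q a m :=
    div_nonneg (mul_nonneg (pow_nonneg hq0 m) (qPochN_nonneg hq0 hq1.le ha m))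
      (qPochN_pos hq0 hq1.le hq1 m).le
  rw [hasSum_iff_tendsto_nat_of_nonneg hnonneg, ← tendsto_add_atTop_iff_nat 1]
  simp_rw [sum_range_succ_qBinomialTerm fun n => (qPochN_pos hq0 hq1.le hq1 n).ne']
  exact (tendsto_qPochN hq _).div (tendsto_qPochN hq q) (qPochInf_ne_zero hq0 hq1 hq1)

lemma qPochN_mul_qBinomialTerm (hq : ∀ n, qPochN q q n ≠ 0) (a : ℝ) (ℓ n : ℕ) :
    qPochN q a ℓ * qBinomialTerm q (a * q ^ ℓ) n
      = q ^ n * qPochN q (q * q ^ n) ℓ * (qPochN q a (ℓ + n) / qPochN q q (ℓ + n)) := by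
  have hn := hq n
  have hnℓ : qPochN q (q * q ^ n) ℓ ≠ 0 := by
    have := hq (n + ℓ)
    rw [qPochN_add] at this
    exact right_ne_zero_of_mul this
  rw [qBinomialTerm, qPochN_add q a ℓ n, add_comm ℓ n, qPochN_add q q n ℓ]
  field_simp
  rw [mul_comm (q ^ n) q, mul_div_assoc, div_self hnℓ, mul_one]

lemma hasSum_qPochN_mul_qBinomialTerm (hq0 : 0 ≤ q) (hq1 : q < 1) {a : ℝ} (ha : a < 1)
    (ℓ : ℕ) :
    HasSum (fun n => qPochN q a ℓ * qBinomialTerm q (a * q ^ ℓ) n)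
      (qPochInf q a / ((1 - a * q ^ ℓ) * qPochInf q q)) := by
  have hℓ := one_sub_mul_pow_pos hq0 hq1.le ha ℓ
  have hval : qPochInf q a / ((1 - a * q ^ ℓ) * qPochInf q q)
      = qPochN q a ℓ * (qPochInf q (a * q ^ ℓ * q) / qPochInf q q) := by
    rw [qPochInf_eq_qPochN_mul (by rwa [abs_of_nonneg hq0]) a (ℓ + 1), qPochN_succ, pow_succ,
      ← mul_assoc]
    field_simp
  rw [hval]
  exact (hasSum_qBinomialTerm hq0 hq1 (by linarith)).mul_left _

end qBinomial

section qLaguerre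

variable {q α : ℝ}

noncomputable def qgammaCompl (q α : ℝ) (n : ℕ) : ℝ := 1 - qgamma q n (α + 1)

lemma rpow_add_one_lt_one (hq0 : 0 < q) (hq1 : q < 1) (hα : -1 < α) : q ^ (α + 1) < 1 :=
  Real.rpow_lt_one hq0.le hq1 (by linarith)

lemma rpow_add_one_mul_lt_one (hq0 : 0 < q) (hq1 : q < 1) (hα : -1 < α) :
    q ^ (α + 1) * q < 1 :=
  mul_lt_one_of_nonneg_of_lt_one_left (by positivity) (rpow_add_one_lt_one hq0 hq1 hα) hq1.le

lemma rpow_natCast_add_add_one (hq0 : 0 < q) (n : ℕ) :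
    q ^ ((n : ℝ) + α + 1) = q ^ (α + 1) * q ^ n := by
  rw [← Real.rpow_add_natCast hq0.ne']
  ring_nf

lemma qgamma_natCast (hq0 : 0 < q) (n : ℕ) :
    qgamma q n (α + 1) = qPochInf q (q ^ n) / qPochInf q (q ^ (α + 1) * q ^ n) := by
  rw [qgamma, Real.rpow_natCast, add_comm, Real.rpow_add_natCast hq0.ne']

lemma qgamma_one (hq0 : 0 < q) :
    qgamma q 1 (α + 1) = qPochInf q q / qPochInf q (q ^ (α + 1) * q) := by
  simpa using qgamma_natCast (α := α) hq0 1

lemma qgamma_natCast_eq_mul_sum (hq0 : 0 < q) (hq1 : q < 1) (hα : -1 < α) (n : ℕ) :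
    qgamma q n (α + 1)
      = qgamma q 1 (α + 1) * ∑ m ∈ range n, qBinomialTerm q (q ^ (α + 1)) m := by
  have hq : |q| < 1 := by rwa [abs_of_pos hq0]
  have hb := rpow_add_one_mul_lt_one hq0 hq1 hα
  cases n with
  | zero => rw [qgamma_natCast hq0]; simp [qPochInf_one hq]
  | succ k =>
    have hqk := (qPochN_pos hq0.le hq1.le hq1 k).ne'
    have hbk := (qPochN_pos hq0.le hq1.le hb k).ne'
    rw [sum_range_succ_qBinomialTerm fun n => (qPochN_pos hq0.le hq1.le hq1 n).ne',
      qgamma_natCast hq0, qgamma_one hq0, qPochInf_eq_qPochN_mul hq q k,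
      qPochInf_eq_qPochN_mul hq (q ^ (α + 1) * q) k, pow_succ', ← mul_assoc, mul_div_mul_comm,
      mul_right_comm (qPochN q q k / _), div_mul_div_cancel₀ hbk, div_self hqk, one_mul]

lemma hasSum_qBinomialTerm_inv_qgamma_one (hq0 : 0 < q) (hq1 : q < 1) (hα : -1 < α) :
    HasSum (qBinomialTerm q (q ^ (α + 1))) (qgamma q 1 (α + 1))⁻¹ := by
  rw [qgamma_one hq0, inv_div]
  exact hasSum_qBinomialTerm hq0.le hq1 (rpow_add_one_lt_one hq0 hq1 hα).le

lemma sum_range_qBinomialTerm_lt_inv_qgamma_one (hq0 : 0 < q) (hq1 : q < 1) (hα : -1 < α)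
    (n : ℕ) :
    ∑ m ∈ range n, qBinomialTerm q (q ^ (α + 1)) m < (qgamma q 1 (α + 1))⁻¹ := by
  have hpos := qBinomialTerm_pos hq0 hq1 (rpow_add_one_lt_one hq0 hq1 hα)
  calc ∑ m ∈ range n, qBinomialTerm q (q ^ (α + 1)) m
      < ∑ m ∈ range (n + 1), qBinomialTerm q (q ^ (α + 1)) m := by
        rw [sum_range_succ]
        linarith [hpos n]
    _ ≤ (qgamma q 1 (α + 1))⁻¹ :=
        sum_le_hasSum _ (fun m _ => (hpos m).le) (hasSum_qBinomialTerm_inv_qgamma_one hq0 hq1 hα)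

lemma qgamma_one_pos (hq0 : 0 < q) (hq1 : q < 1) (hα : -1 < α) : 0 < qgamma q 1 (α + 1) := by
  simpa using sum_range_qBinomialTerm_lt_inv_qgamma_one hq0 hq1 hα 0

lemma qgammaCompl_pos (hq0 : 0 < q) (hq1 : q < 1) (hα : -1 < α) (n : ℕ) :
    0 < qgammaCompl q α n := by
  have hγ := qgamma_one_pos hq0 hq1 hα
  have h := mul_lt_mul_of_pos_left (sum_range_qBinomialTerm_lt_inv_qgamma_one hq0 hq1 hα n) hγ
  rw [mul_inv_cancel₀ hγ.ne'] at h
  rw [qgammaCompl, qgamma_natCast_eq_mul_sum hq0 hq1 hα]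
  linarith

lemma qgammaCompl_zero (hq0 : 0 < q) (hq1 : q < 1) (hα : -1 < α) : qgammaCompl q α 0 = 1 := by
  rw [qgammaCompl, qgamma_natCast_eq_mul_sum hq0 hq1 hα, sum_range_zero, mul_zero, sub_zero]

lemma qgammaCompl_succ (hq0 : 0 < q) (hq1 : q < 1) (hα : -1 < α) (k : ℕ) :
    qgammaCompl q α (k + 1)
      = 1 - qgamma q 1 (α + 1) * (qPochN q (q ^ (α + 1) * q) k / qPochN q q k) := by
  rw [qgammaCompl, qgamma_natCast_eq_mul_sum hq0 hq1 hα,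
    sum_range_succ_qBinomialTerm fun n => (qPochN_pos hq0.le hq1.le hq1 n).ne']

lemma qgammaCompl_sub_succ (hq0 : 0 < q) (hq1 : q < 1) (hα : -1 < α) (n : ℕ) :
    qgammaCompl q α n - qgammaCompl q α (n + 1)
      = qgamma q 1 (α + 1) * qBinomialTerm q (q ^ (α + 1)) n := by
  rw [qgammaCompl, qgammaCompl, qgamma_natCast_eq_mul_sum hq0 hq1 hα,
    qgamma_natCast_eq_mul_sum hq0 hq1 hα, sum_range_succ]
  ring

lemma rQL_eq (n : ℕ) : rQL q α n = qgammaCompl q α (n + 1) / qgammaCompl q α n := by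
  rw [rQL, qgammaCompl, qgammaCompl, Nat.cast_succ]

lemma lamQL_eq (n : ℕ) :
    lamQL q α n = q ^ (-(2 * (n : ℝ)) - α - 1) * (1 - q ^ ((n : ℝ) + α + 1))
      * qgammaCompl q α n / qgammaCompl q α (n + 1) := by
  rw [lamQL, rQL_eq, div_div_eq_mul_div]

lemma lamQL_div_muQL_succ (hq0 : 0 < q) (hq1 : q < 1) (hα : -1 < α) (n : ℕ) :
    lamQL q α n / muQL q α (n + 1) = q * (1 - q ^ (α + 1) * q ^ n) * qgammaCompl q α n
      / ((1 - q * q ^ n) * qgammaCompl q α (n + 2)) := by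
  have hpow : q ^ (-(2 * (n : ℝ)) - α - 1) = q * q ^ (-(2 * ((n + 1 : ℕ) : ℝ)) - α) := by
    rw [← Real.rpow_one_add' hq0.le (by push_cast; linarith)]
    push_cast
    ring_nf
  have hg := (qgammaCompl_pos hq0 hq1 hα (n + 1)).ne'
  have hr := (Real.rpow_pos_of_pos hq0 (-(2 * ((n + 1 : ℕ) : ℝ)) - α)).ne'
  have hqn := (one_sub_mul_pow_pos hq0.le hq1.le hq1 n).ne'
  rw [lamQL_eq, hpow, rpow_natCast_add_add_one hq0, muQL, rQL_eq, Real.rpow_natCast, pow_succ']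
  field_simp

lemma piQL_eq (hq0 : 0 < q) (hq1 : q < 1) (hα : -1 < α) (n : ℕ) :
    piQL q α n = qBinomialTerm q (q ^ (α + 1)) n * qgammaCompl q α 1
      / (qgammaCompl q α n * qgammaCompl q α (n + 1)) := by
  have hg (m : ℕ) := (qgammaCompl_pos hq0 hq1 hα m).ne'
  induction n with
  | zero =>
    rw [piQL, prod_range_zero, qBinomialTerm, qPochN_zero, qPochN_zero,
      qgammaCompl_zero hq0 hq1 hα]
    field_simp [hg 1]
  | succ n ih =>
    have hg0 := hg n
    have hg1 := hg (n + 1)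
    have hg2 := hg (n + 2)
    have hqn := (one_sub_mul_pow_pos hq0.le hq1.le hq1 n).ne'
    rw [piQL, prod_range_succ, ← piQL, ih, lamQL_div_muQL_succ hq0 hq1 hα, qBinomialTerm_succ]
    field_simp

lemma piQL_eq_sub_inv (hq0 : 0 < q) (hq1 : q < 1) (hα : -1 < α) (n : ℕ) :
    piQL q α n = qgammaCompl q α 1 / qgamma q 1 (α + 1)
      * ((qgammaCompl q α (n + 1))⁻¹ - (qgammaCompl q α n)⁻¹) := by
  have hg0 := (qgammaCompl_pos hq0 hq1 hα n).ne'
  have hg1 := (qgammaCompl_pos hq0 hq1 hα (n + 1)).ne'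
  have hγ := (qgamma_one_pos hq0 hq1 hα).ne'
  rw [piQL_eq hq0 hq1 hα]
  field_simp
  linear_combination -qgammaCompl q α 1 * qgammaCompl_sub_succ hq0 hq1 hα n

lemma TQL_eq (hq0 : 0 < q) (hq1 : q < 1) (hα : -1 < α) (k : ℕ) :
    TQL q α k
      = qgammaCompl q α 1 / qgamma q 1 (α + 1) * ((qgammaCompl q α (k + 1))⁻¹ - 1) := by
  rw [TQL, sum_congr rfl fun n _ => piQL_eq_sub_inv hq0 hq1 hα n, ← mul_sum,
    sum_range_sub (fun n => (qgammaCompl q α n)⁻¹), qgammaCompl_zero hq0 hq1 hα, inv_one]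

lemma TQL_div_lamQL_mul_piQL (hq0 : 0 < q) (hq1 : q < 1) (hα : -1 < α) (k : ℕ) :
    TQL q α k / (lamQL q α k * piQL q α k)
      = q ^ (α + 1) * q ^ k * qgammaCompl q α (k + 1) / (1 - q ^ (α + 1)) := by
  set D := qPochN q (q ^ (α + 1) * q) k / qPochN q q k
  have hb := rpow_add_one_lt_one hq0 hq1 hα
  have hD : 0 < D := div_pos (qPochN_pos hq0.le hq1.le (rpow_add_one_mul_lt_one hq0 hq1 hα) k)
    (qPochN_pos hq0.le hq1.le hq1 k)
  have hg0 := (qgammaCompl_pos hq0 hq1 hα k).ne'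
  have hg1 := (qgammaCompl_pos hq0 hq1 hα 1).ne'
  have hgk := (qgammaCompl_pos hq0 hq1 hα (k + 1)).ne'
  have hγ := (qgamma_one_pos hq0 hq1 hα).ne'
  have hT : TQL q α k = qgammaCompl q α 1 * D / qgammaCompl q α (k + 1) := by
    rw [TQL_eq hq0 hq1 hα]
    field_simp
    linear_combination -qgammaCompl_succ hq0 hq1 hα k
  have hlamPi : lamQL q α k * piQL q α k = q ^ (-(2 * (k : ℝ)) - α - 1) * q ^ k
      * (1 - q ^ (α + 1)) * D * qgammaCompl q α 1 / qgammaCompl q α (k + 1) ^ 2 := by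
    have hs : qBinomialTerm q (q ^ (α + 1)) k * (1 - q ^ (α + 1) * q ^ k)
        = q ^ k * (1 - q ^ (α + 1)) * D := qBinomialTerm_mul_one_sub _ _ _
    rw [lamQL_eq, piQL_eq hq0 hq1 hα, rpow_natCast_add_add_one hq0, mul_assoc _ (q ^ k),
      mul_assoc _ (q ^ k * _), ← hs]
    field_simp
  have hpow : q ^ (-(2 * (k : ℝ)) - α - 1) * (q ^ (α + 1) * q ^ k * q ^ k) = 1 := by
    rw [← Real.rpow_natCast, ← Real.rpow_add hq0, ← Real.rpow_add hq0, ← Real.rpow_add hq0]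
    convert Real.rpow_zero q using 2
    ring
  have hb1 : 1 - q ^ (α + 1) ≠ 0 := by linarith
  rw [hT, hlamPi]
  field_simp
  linear_combination -hpow

lemma hasSum_qPochDesc_mul_qgammaCompl (hq0 : 0 < q) (hq1 : q < 1) (hα : -1 < α) (ℓ : ℕ) :
    HasSum (fun k => qPochDesc q k ℓ
        * (q ^ (α + 1) * q ^ k * qgammaCompl q α (k + 1) / (1 - q ^ (α + 1))))
      (q ^ (α + 1) * q ^ ℓ * (q * q ^ ℓ)
        / ((1 - q * q ^ ℓ) * (1 - q ^ (α + 1) * q * q ^ ℓ))) := by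
  have hb1 : 1 - q ^ (α + 1) ≠ 0 := (sub_pos.2 (rpow_add_one_lt_one hq0 hq1 hα)).ne'
  have hbq := rpow_add_one_mul_lt_one hq0 hq1 hα
  have hq (n : ℕ) := (qPochN_pos hq0.le hq1.le hq1 n).ne'
  have hP := qPochInf_ne_zero hq0.le hq1 hq1
  have hPb := qPochInf_ne_zero hq0.le hq1 hbq
  have h1 := (one_sub_mul_pow_pos hq0.le hq1.le hq1 ℓ).ne'
  have h2 := (one_sub_mul_pow_pos hq0.le hq1.le hbq ℓ).ne'
  have hval : q ^ (α + 1) * q ^ ℓ * (q * q ^ ℓ)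
        / ((1 - q * q ^ ℓ) * (1 - q ^ (α + 1) * q * q ^ ℓ))
      = q ^ (α + 1) * q ^ ℓ / (1 - q ^ (α + 1))
        * (qPochInf q q / ((1 - q * q ^ ℓ) * qPochInf q q)
          - qgamma q 1 (α + 1) * (qPochInf q (q ^ (α + 1) * q)
            / ((1 - q ^ (α + 1) * q * q ^ ℓ) * qPochInf q q))) := by
    rw [qgamma_one hq0]
    generalize qPochInf q (q ^ (α + 1) * q) = Pb at *
    rw [mul_assoc (q ^ (α + 1)) q] at h2 ⊢
    generalize q * q ^ ℓ = Q at *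
    field_simp
    ring
  rw [← hasSum_nat_add_iff' ℓ,
    sum_eq_zero fun k hk => by rw [qPochDesc_of_lt q (mem_range.1 hk), zero_mul], sub_zero, hval]
  refine (((hasSum_qPochN_mul_qBinomialTerm hq0.le hq1 hq1 ℓ).sub
    ((hasSum_qPochN_mul_qBinomialTerm hq0.le hq1 hbq ℓ).mul_left _)).mul_left _).congr_fun
    fun n => ?_
  rw [qPochDesc_add_self, qgammaCompl_succ hq0 hq1 hα, qPochN_mul_qBinomialTerm hq,
    qPochN_mul_qBinomialTerm hq, div_self (hq _), add_comm ℓ n]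
  ring

end qLaguerre

/-- Lemma 6.13, equation (6.39): for every `ℓ ≥ 0` the series
`Σ_{k=0}^∞ (q^k;q^{−1})_ℓ T̃_k/(λ̃_k π̃_k)` converges and equals
`q^{2ℓ+α+2}/((1−q^{ℓ+1})(1−q^{ℓ+α+2}))`. -/
theorem modified_qLaguerre_T_sum_infinite
    (q α : ℝ) (hq0 : 0 < q) (hq1 : q < 1) (hα : -1 < α) (ℓ : ℕ) :
    Summable (fun k : ℕ =>
      qPochDesc q k ℓ * TQL q α k / (lamQL q α k * piQL q α k)) ∧
    ∑' k : ℕ, qPochDesc q k ℓ * TQL q α k / (lamQL q α k * piQL q α k)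
      = q ^ (2 * (ℓ : ℝ) + α + 2)
          / ((1 - q ^ ((ℓ : ℝ) + 1)) * (1 - q ^ ((ℓ : ℝ) + α + 2))) := by
  have hsum : HasSum (fun k => qPochDesc q k ℓ * TQL q α k / (lamQL q α k * piQL q α k)) _ :=
    (hasSum_qPochDesc_mul_qgammaCompl hq0 hq1 hα ℓ).congr_fun fun k => by
      rw [mul_div_assoc, TQL_div_lamQL_mul_piQL hq0 hq1 hα]
  have hpow₁ : q ^ ((ℓ : ℝ) + 1) = q * q ^ ℓ := by
    rw [Real.rpow_add_one hq0.ne', Real.rpow_natCast, mul_comm]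
  have hpow₂ : q ^ ((ℓ : ℝ) + α + 2) = q ^ (α + 1) * q * q ^ ℓ := by
    rw [show (ℓ : ℝ) + α + 2 = α + 1 + 1 + ℓ by ring, Real.rpow_add_natCast hq0.ne',
      Real.rpow_add_one hq0.ne']
  have hpow₃ : q ^ (2 * (ℓ : ℝ) + α + 2) = q ^ (α + 1) * q ^ ℓ * (q * q ^ ℓ) := by
    rw [show 2 * (ℓ : ℝ) + α + 2 = α + 1 + 1 + ℓ + ℓ by ring,
      Real.rpow_add_natCast hq0.ne', Real.rpow_add_natCast hq0.ne', Real.rpow_add_one hq0.ne']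
    ring
  rw [hpow₁, hpow₂, hpow₃]
  exact ⟨hsum.summable, hsum.tsum_eq⟩
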